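/- Let g ≥ 1 be an odd integer, set a = (g+1)/2, and let b, c ∈ ℂ with b^g = c. Let x, y ∈ ℂ with x ≠ 0 and y² = x^{2g+1} + c·x. Then the point (u, v) := ((x² + b)/x, y/x^a) satisfies v² = ∑_{k=0}^{⌊g/2⌋} (-1)^k · T(g, k) · b^k · u^{g-2k}, where T(g, k) = C(g-k, k) + C(g-k-1, k-1) is the integer (g/(g-k))·C(g-k, k). -/

import Mathlib

/-!
Put `u = s + t` and `p = s t`. Both `s ^ n + t ^ n` and the Lucas sum
`∑ k ≤ n / 2, (-1) ^ k T(n, k) p ^ k u ^ (n - 2k)` satisfy `F (n + 2) = u F (n + 1) - p F n`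
(for the sum this is Pascal's rule for `T`) and they agree for `n = 1, 2`; this is Waring's formula.
With `s = x`, `t = b / x` we get `u = (x² + b) / x`, `p = b`, and the sum becomes
`x ^ g + b ^ g / x ^ g = (x ^ (2g+1) + c x) / x ^ (g+1)`, which is `(y / x ^ a) ^ 2` as `g + 1 = 2a`.
-/

/-- The Lucas-coefficient triangle `T(g, k) = C(g-k, k) + C(g-k-1, k-1)` as an integer,
with the convention `C(m, -1) = 0`, so that `T(g, 0) = 1`. -/
def lucasT (g k : ℕ) : ℤ :=
  (Nat.choose (g - k) k : ℤ) + if k = 0 then 0 else (Nat.choose (g - k - 1) (k - 1) : ℤ)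

open Finset

theorem lucasT_zero_right (n : ℕ) : lucasT n 0 = 1 := by
  simp [lucasT]

theorem lucasT_add_two_succ {n k : ℕ} (hk : k + 1 ≤ n) :
    lucasT (n + 2) (k + 1) = lucasT (n + 1) (k + 1) + lucasT n k := by
  obtain ⟨m, rfl⟩ := Nat.exists_eq_add_of_le hk
  have e1 : k + 1 + m + 2 - (k + 1) = m + 2 := by omega
  have e2 : k + 1 + m + 1 - (k + 1) = m + 1 := by omega
  have e3 : k + 1 + m - k = m + 1 := by omega
  have pascal : ((m + 1).choose k : ℤ) = m.choose k + if k = 0 then 0 else m.choose (k - 1) := by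
    rcases k with _ | j
    · simp
    · simp [Nat.choose_succ_succ', add_comm]
  simp only [lucasT, e1, e2, e3, Nat.add_sub_cancel, if_neg (Nat.succ_ne_zero k),
    Nat.choose_succ_succ' (m + 1) k]
  push_cast at pascal ⊢
  linear_combination pascal

-- Truncated subtraction makes `lucasT 0 1 = lucasT 1 1 = 1`.
theorem lucasT_eq_zero_of_lt {n k : ℕ} (hn : 2 ≤ n) (hk : n < 2 * k) : lucasT n k = 0 := by
  rw [lucasT, Nat.choose_eq_zero_of_lt (by omega : n - k < k), if_neg (by omega),
    Nat.choose_eq_zero_of_lt (by omega : n - k - 1 < k - 1)]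
  simp

section

variable {R : Type*} [CommRing R]

def lucasTerm (u p : R) (n k : ℕ) : R :=
  ((-1 : ℤ) ^ k * lucasT n k : ℤ) * p ^ k * u ^ (n - 2 * k)

def lucasSum (u p : R) (n : ℕ) : R :=
  ∑ k ∈ range (n / 2 + 1), lucasTerm u p n k

theorem lucasTerm_zero_right (u p : R) (n : ℕ) : lucasTerm u p n 0 = u ^ n := by
  simp [lucasTerm, lucasT_zero_right]

theorem lucasTerm_add_two_succ (u p : R) {n k : ℕ} (hn : 1 ≤ n) (hk : 2 * k ≤ n) :
    lucasTerm u p (n + 2) (k + 1) = u * lucasTerm u p (n + 1) (k + 1) - p * lucasTerm u p n k := by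
  simp only [lucasTerm]
  rw [lucasT_add_two_succ (by omega)]
  rcases hk.lt_or_eq with hlt | rfl
  · obtain ⟨d, rfl⟩ := Nat.exists_eq_add_of_lt hlt
    rw [show 2 * k + d + 1 + 2 - 2 * (k + 1) = d + 1 by omega,
      show 2 * k + d + 1 + 1 - 2 * (k + 1) = d by omega,
      show 2 * k + d + 1 - 2 * k = d + 1 by omega]
    push_cast
    ring
  · rw [lucasT_eq_zero_of_lt (by omega) (by omega), show 2 * k + 2 - 2 * (k + 1) = 0 by omega,
      show 2 * k + 1 - 2 * (k + 1) = 0 by omega, Nat.sub_self]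
    push_cast
    ring

theorem lucasSum_eq_sum_range (u p : R) {n N : ℕ} (hn : 2 ≤ n) (hN : n / 2 + 1 ≤ N) :
    lucasSum u p n = ∑ k ∈ range N, lucasTerm u p n k := by
  refine sum_subset (range_subset_range.2 hN) fun k _ hk => ?_
  rw [lucasTerm, lucasT_eq_zero_of_lt hn (by rw [mem_range] at hk; omega)]
  simp

theorem lucasSum_add_two (u p : R) {n : ℕ} (hn : 1 ≤ n) :
    lucasSum u p (n + 2) = u * lucasSum u p (n + 1) - p * lucasSum u p n := by
  rw [lucasSum_eq_sum_range u p (n := n + 1) (N := n / 2 + 2) (by omega) (by omega), lucasSum,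
    lucasSum, show (n + 2) / 2 + 1 = n / 2 + 1 + 1 by omega, sum_range_succ' _ (n / 2 + 1),
    sum_range_succ' _ (n / 2 + 1),
    sum_congr rfl fun k hk => lucasTerm_add_two_succ u p hn (by rw [mem_range] at hk; omega),
    sum_sub_distrib, lucasTerm_zero_right, lucasTerm_zero_right, ← mul_sum, ← mul_sum]
  ring

theorem lucasSum_add_mul (s t : R) {n : ℕ} (hn : 1 ≤ n) :
    lucasSum (s + t) (s * t) n = s ^ n + t ^ n := by
  suffices h : ∀ m, lucasSum (s + t) (s * t) (m + 1) = s ^ (m + 1) + t ^ (m + 1) ∧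
      lucasSum (s + t) (s * t) (m + 2) = s ^ (m + 2) + t ^ (m + 2) by
    obtain ⟨m, rfl⟩ := Nat.exists_eq_add_of_le' hn
    exact (h m).1
  intro m
  induction m with
  | zero =>
    refine ⟨by simp [lucasSum, lucasTerm, lucasT], ?_⟩
    rw [lucasSum, show 2 / 2 + 1 = 2 from rfl, sum_range_succ, sum_range_one, lucasTerm_zero_right,
      lucasTerm, show lucasT 2 1 = 2 from rfl]
    push_cast
    ring
  | succ m ih =>
    refine ⟨ih.2, ?_⟩
    rw [lucasSum_add_two _ _ (by omega), ih.2, ih.1]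
    ring

end

/-- For odd `g ≥ 1`, `a = (g+1)/2`, and `b, c ∈ ℂ` with `b^g = c`, the map
`φ(x, y) = ((x² + b)/x, y/x^a)` sends affine points (with `x ≠ 0`) of the curve
`y² = x^{2g+1} + cx` to affine points of the curve
`y² = ∑_{k=0}^{⌊g/2⌋} (-1)^k T(g, k) b^k x^{g-2k}`. -/
theorem hyperelliptic_morphism_twisted (g : ℕ) (hg : 1 ≤ g) (hodd : Odd g)
    (b c : ℂ) (hbc : b ^ g = c) (x y : ℂ) (hx : x ≠ 0)
    (hC : y ^ 2 = x ^ (2 * g + 1) + c * x) :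
    (y / x ^ ((g + 1) / 2)) ^ 2 =
      ∑ k ∈ Finset.range (g / 2 + 1),
        ((-1 : ℤ) ^ k * lucasT g k : ℤ) * b ^ k * ((x ^ 2 + b) / x) ^ (g - 2 * k) := by
  have hsum : x + b / x = (x ^ 2 + b) / x := by field_simp
  have hprod : x * (b / x) = b := by field_simp
  have hwaring := lucasSum_add_mul x (b / x) hg
  rw [hsum, hprod] at hwaring
  change _ = lucasSum _ _ _
  obtain ⟨m, rfl⟩ := hodd
  rw [hwaring, div_pow, div_pow b, hC, ← hbc, show (2 * m + 1 + 1) / 2 = m + 1 by omega]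
  field_simp
  ring
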